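/- The sequence (O_d)_{d≥1} is sub-Fibonacci: O_1 = O_2 = 1, the sequence is non-decreasing (O_{d-1} ≤ O_d for all d ≥ 2), and O_d ≤ O_{d-1} + O_{d-2} for all d ≥ 3. -/

import Mathlib

/-- The Macaulay bound `a^⟨t⟩`: writing the (unique, greedy) binomial expansion
`a = C(k(t),t) + C(k(t-1),t-1) + ⋯ + C(k(j),j)` with `k(t) > ⋯ > k(j) ≥ j ≥ 1`,
`macaulay t a = C(k(t)+1,t+1) + C(k(t-1)+1,t) + ⋯ + C(k(j)+1,j+1)`.
(The value at `t = 0` is irrelevant for the definitions below.) -/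
def macaulay : ℕ → ℕ → ℕ
  | 0, a => a
  | t+1, a =>
    if a = 0 then 0
    else
      Nat.choose (Nat.findGreatest (fun m => Nat.choose m (t+1) ≤ a) (a + t + 1) + 1) (t+2)
        + macaulay t (a - Nat.choose
            (Nat.findGreatest (fun m => Nat.choose m (t+1) ≤ a) (a + t + 1)) (t+1))

/-- A finite O-sequence `(a_0, a_1, …, a_s)`, encoded as a nonempty list of
positive integers with `a_0 = 1` and `a_{t+1} ≤ a_t^⟨t⟩` for all `1 ≤ t ≤ s-1`. -/
def IsOSeq (l : List ℕ) : Prop :=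
  l ≠ [] ∧ (∀ x ∈ l, 0 < x) ∧ l.getD 0 0 = 1 ∧
    ∀ t : ℕ, 1 ≤ t → t + 1 < l.length → l.getD (t+1) 0 ≤ macaulay t (l.getD t 0)

/-- `numOSeq d` = the number `O_d` of finite O-sequences of multiplicity `d`. -/
noncomputable def numOSeq (d : ℕ) : ℕ := {l : List ℕ | IsOSeq l ∧ l.sum = d}.ncard

/-- `numASeq d` = the number `A_d` of finite O-sequences of multiplicity `d`
whose last entry is strictly greater than `1`. -/
noncomputable def numASeq (d : ℕ) : ℕ :=
  {l : List ℕ | IsOSeq l ∧ l.sum = d ∧ 1 < l.getLastD 0}.ncard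

/-- `numOCond p n k d` = the number `O(p,n,k,d)` of finite O-sequences
`(a_0,…,a_s)` of multiplicity `d` with `s ≤ n`, `a_i = C(p-1+i, i)` for all
`0 ≤ i ≤ k` (in particular `s ≥ k`), and `a_i < C(p-1+i, i)` for `k < i ≤ s`. -/
noncomputable def numOCond (p n k d : ℕ) : ℕ :=
  {l : List ℕ | IsOSeq l ∧ l.sum = d ∧ l.length - 1 ≤ n ∧ k ≤ l.length - 1 ∧
    (∀ i ≤ k, l.getD i 0 = Nat.choose (p - 1 + i) i) ∧
    (∀ i : ℕ, k < i → i < l.length → l.getD i 0 < Nat.choose (p - 1 + i) i)}.ncard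

lemma macaulay_zero (t : ℕ) : macaulay t 0 = 0 := by cases t <;> simp [macaulay]

lemma macaulay_one {t : ℕ} (ht : 1 ≤ t) : macaulay t 1 = 1 := by
  cases t with
  | zero => omega
  | succ s =>
    have hg : Nat.findGreatest (fun m => Nat.choose m (s+1) ≤ 1) (1 + s + 1) = s + 1 := by
      rw [Nat.findGreatest_eq_iff]
      refine ⟨by omega, fun _ => by simp, fun n hn hn2 h => ?_⟩
      have he : n = s + 2 := by omega
      subst he
      rw [Nat.choose_succ_self_right] at h
      omega
    simp only [macaulay, if_neg one_ne_zero, hg, Nat.choose_self, macaulay_zero]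
    simp [macaulay_zero]

lemma one_le_macaulay {t a : ℕ} (ht : 1 ≤ t) (ha : 1 ≤ a) : 1 ≤ macaulay t a := by
  cases t with
  | zero => omega
  | succ s =>
    have hm : s + 1 ≤ Nat.findGreatest (fun m => Nat.choose m (s+1) ≤ a) (a + s + 1) :=
      Nat.le_findGreatest (by omega) (by simpa using ha)
    have hc : 0 < Nat.choose
        (Nat.findGreatest (fun m => Nat.choose m (s+1) ≤ a) (a + s + 1) + 1) (s+2) :=
      Nat.choose_pos (by omega)
    simp only [macaulay, if_neg (by omega : a ≠ 0)]
    omega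
lemma getD_concat_lt (m : List ℕ) (a : ℕ) {i : ℕ} (h : i < m.length) :
    (m ++ [a]).getD i 0 = m.getD i 0 := List.getD_append _ _ _ _ h

lemma getD_concat_len (m : List ℕ) (a : ℕ) : (m ++ [a]).getD m.length 0 = a := by
  rw [List.getD_append_right _ _ _ _ le_rfl]; simp

lemma concat_inj {m1 m2 : List ℕ} {a b : ℕ} (h : m1 ++ [a] = m2 ++ [b]) :
    m1 = m2 ∧ a = b := by
  constructor
  · have := congrArg List.dropLast h; simpa using this
  · have := congrArg (fun l => List.getLastD l 0) h; simpa using this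

lemma exists_concat {l : List ℕ} (h : l ≠ []) :
    ∃ m b, l = m ++ [b] ∧ l.getLastD 0 = b := by
  rcases l.eq_nil_or_concat' with rfl | ⟨m, b, rfl⟩
  · exact absurd rfl h
  · exact ⟨m, b, rfl, by simp⟩

lemma getD_pos_of_isOSeq {l : List ℕ} (h : IsOSeq l) {i : ℕ} (hi : i < l.length) :
    0 < l.getD i 0 := by
  rw [List.getD_eq_getElem _ _ hi]; exact h.2.1 _ (List.getElem_mem hi)

lemma isOSeq_concat {m : List ℕ} (hm : m ≠ []) (a : ℕ) :
    IsOSeq (m ++ [a]) ↔ IsOSeq m ∧ 0 < a ∧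
      (2 ≤ m.length → a ≤ macaulay (m.length - 1) (m.getD (m.length - 1) 0)) := by
  have hlen : 1 ≤ m.length := List.length_pos_iff.mpr hm
  constructor
  · rintro ⟨hne, hpos, h0, hc⟩
    refine ⟨⟨hm, fun x hx => hpos x (by simp [hx]), ?_, ?_⟩, hpos a (by simp), ?_⟩
    · rw [← getD_concat_lt m a hlen]; exact h0
    · intro t ht htl
      have h1 := hc t ht (by simp; omega)
      rwa [getD_concat_lt m a htl, getD_concat_lt m a (by omega)] at h1
    · intro h2
      have h1 := hc (m.length - 1) (by omega) (by simp; omega)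
      have he : m.length - 1 + 1 = m.length := by omega
      rw [he, getD_concat_len, getD_concat_lt m a (by omega)] at h1
      exact h1
  · rintro ⟨⟨hne, hpos, h0, hc⟩, hapos, hlast⟩
    refine ⟨by simp, ?_, ?_, ?_⟩
    · intro x hx
      rcases List.mem_append.mp hx with hx | hx
      · exact hpos x hx
      · simp at hx; omega
    · rw [getD_concat_lt m a hlen]; exact h0
    · intro t ht htl
      simp only [List.length_append, List.length_singleton] at htl
      rcases Nat.lt_or_ge (t+1) m.length with h | h
      · rw [getD_concat_lt m a h, getD_concat_lt m a (by omega)]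
        exact hc t ht h
      · have he : t + 1 = m.length := by omega
        rw [he, getD_concat_len, getD_concat_lt m a (by omega)]
        have he2 : t = m.length - 1 := by omega
        rw [he2]
        exact hlast (by omega)
lemma finite_pos_sum (d : ℕ) : {l : List ℕ | (∀ x ∈ l, 0 < x) ∧ l.sum = d}.Finite := by
  induction d using Nat.strong_induction_on with
  | _ d ih =>
    match d with
    | 0 =>
      apply Set.Finite.subset (Set.finite_singleton ([] : List ℕ))
      rintro (_ | ⟨a, t⟩) ⟨hp, hs⟩
      · rfl
      · exfalso
        have := hp a List.mem_cons_self
        simp [List.sum_cons] at hs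
        omega
    | (d+1) =>
      apply Set.Finite.subset (Set.Finite.biUnion (Set.finite_Icc 1 (d+1))
        (fun a ha => Set.Finite.image (a :: ·)
          (ih (d+1-a) (by rcases Set.mem_Icc.mp ha with ⟨h1, h2⟩; omega))))
      rintro (_ | ⟨a, t⟩) ⟨hp, hs⟩
      · simp at hs
      · simp only [List.sum_cons] at hs
        have ha : 0 < a := hp a List.mem_cons_self
        refine Set.mem_biUnion (Set.mem_Icc.mpr ⟨ha, by omega⟩)
          ⟨t, ⟨fun x hx => hp x (List.mem_cons_of_mem a hx), by omega⟩, rfl⟩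

lemma finite_O (d : ℕ) : {l : List ℕ | IsOSeq l ∧ l.sum = d}.Finite :=
  (finite_pos_sum d).subset (fun l hl => ⟨hl.1.2.1, hl.2⟩)

lemma main1 {d : ℕ} (hd : 2 ≤ d) : numOSeq d = numOSeq (d-1) + numASeq d := by
  set T1 := {l : List ℕ | IsOSeq l ∧ l.sum = d ∧ l.getLastD 0 = 1} with hT1
  set T2 := {l : List ℕ | IsOSeq l ∧ l.sum = d ∧ 1 < l.getLastD 0} with hT2
  have hfin1 : T1.Finite := (finite_O d).subset (fun l hl => ⟨hl.1, hl.2.1⟩)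
  have hfin2 : T2.Finite := (finite_O d).subset (fun l hl => ⟨hl.1, hl.2.1⟩)
  have hS : {l : List ℕ | IsOSeq l ∧ l.sum = d} = T1 ∪ T2 := by
    ext l
    simp only [hT1, hT2, Set.mem_setOf_eq, Set.mem_union]
    constructor
    · rintro ⟨h1, h2⟩
      obtain ⟨m, b, rfl, hb⟩ := exists_concat h1.1
      have hbpos : 0 < b := h1.2.1 b (by simp)
      rw [hb]
      rcases Nat.lt_or_ge 1 b with h | h
      · exact Or.inr ⟨h1, h2, h⟩
      · exact Or.inl ⟨h1, h2, by omega⟩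
    · rintro (⟨h1, h2, _⟩ | ⟨h1, h2, _⟩) <;> exact ⟨h1, h2⟩
  have hdisj : Disjoint T1 T2 := by
    rw [Set.disjoint_left]
    rintro l ⟨_, _, h1⟩ ⟨_, _, h2⟩
    omega
  have hcard1 : T1.ncard = numOSeq (d-1) := by
    apply le_antisymm
    · apply Set.ncard_le_ncard_of_injOn List.dropLast (ht := finite_O (d-1))
      · rintro l ⟨h1, h2, h3⟩
        obtain ⟨m, b, rfl, hb⟩ := exists_concat h1.1
        rw [hb] at h3
        subst h3
        have hm : m ≠ [] := by
          rintro rfl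
          simp at h2
          omega
        rw [List.dropLast_concat]
        obtain ⟨hOm, -, -⟩ := (isOSeq_concat hm 1).mp h1
        refine ⟨hOm, ?_⟩
        simp at h2
        omega
      · rintro l1 ⟨h1, -, h1b⟩ l2 ⟨h2, -, h2b⟩ h
        obtain ⟨m1, b1, rfl, hb1⟩ := exists_concat h1.1
        obtain ⟨m2, b2, rfl, hb2⟩ := exists_concat h2.1
        rw [hb1] at h1b; rw [hb2] at h2b
        subst h1b; subst h2b
        rw [List.dropLast_concat, List.dropLast_concat] at h
        rw [h]
    · apply Set.ncard_le_ncard_of_injOn (· ++ [1]) (ht := hfin1)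
      · rintro l ⟨h1, h2⟩
        refine ⟨(isOSeq_concat h1.1 1).mpr ⟨h1, one_pos, fun h2l => ?_⟩, by simp [h2]; omega, by simp⟩
        exact one_le_macaulay (by omega) (getD_pos_of_isOSeq h1 (by omega))
      · rintro l1 - l2 - h
        exact (concat_inj h).1
  rw [numOSeq, hS, Set.ncard_union_eq hdisj hfin1 hfin2, hcard1, numASeq]

lemma finite_A (d : ℕ) : {l : List ℕ | IsOSeq l ∧ l.sum = d ∧ 1 < l.getLastD 0}.Finite :=
  (finite_O d).subset (fun l hl => ⟨hl.1, hl.2.1⟩)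

lemma main2 {d : ℕ} (hd : 4 ≤ d) : numASeq d ≤ numASeq (d-1) + numASeq (d-2) := by
  set U2 := {l : List ℕ | IsOSeq l ∧ l.sum = d ∧ l.getLastD 0 = 2} with hU2
  set U3 := {l : List ℕ | IsOSeq l ∧ l.sum = d ∧ 3 ≤ l.getLastD 0} with hU3
  have hfin2 : U2.Finite := (finite_O d).subset (fun l hl => ⟨hl.1, hl.2.1⟩)
  have hfin3 : U3.Finite := (finite_O d).subset (fun l hl => ⟨hl.1, hl.2.1⟩)
  have hsub : {l : List ℕ | IsOSeq l ∧ l.sum = d ∧ 1 < l.getLastD 0} ⊆ U2 ∪ U3 := by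
    rintro l ⟨h1, h2, h3⟩
    rcases Nat.lt_or_ge (l.getLastD 0) 3 with h | h
    · exact Or.inl ⟨h1, h2, by omega⟩
    · exact Or.inr ⟨h1, h2, h⟩
  have hc2 : U2.ncard ≤ numASeq (d-2) := by
    apply Set.ncard_le_ncard_of_injOn List.dropLast (ht := finite_A (d-2))
    · rintro l ⟨h1, h2, h3⟩
      obtain ⟨m, b, rfl, hb⟩ := exists_concat h1.1
      rw [hb] at h3; subst h3
      have hm : m ≠ [] := by
        rintro rfl
        have := h1.2.2.1
        simp at this
      rw [List.dropLast_concat]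
      obtain ⟨hOm, -, hcon⟩ := (isOSeq_concat hm 2).mp h1
      have hsm : m.sum = d - 2 := by simp at h2; omega
      refine ⟨hOm, hsm, ?_⟩
      -- last of m is > 1
      obtain ⟨m', c, rfl, hc⟩ := exists_concat hm
      rw [hc]
      by_contra hcle
      have hc1 : c = 1 := by
        have : 0 < c := hOm.2.1 c (by simp)
        omega
      subst hc1
      have hlen2 : 2 ≤ (m' ++ [1]).length := by
        rcases Nat.lt_or_ge ((m' ++ [1]).length) 2 with h | h
        · exfalso
          have : m' = [] := by
            simp at h
            exact List.length_eq_zero_iff.mp (by simp [h])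
          subst this
          simp at hsm
          omega
        · exact h
      have := hcon hlen2
      have hlast : (m' ++ [1]).getD ((m' ++ [1]).length - 1) 0 = 1 := by
        have : (m' ++ [1]).length - 1 = m'.length := by simp
        rw [this, getD_concat_len]
      rw [hlast, macaulay_one (by omega)] at this
      omega
    · rintro l1 ⟨h1, -, h1b⟩ l2 ⟨h2, -, h2b⟩ h
      obtain ⟨m1, b1, rfl, hb1⟩ := exists_concat h1.1
      obtain ⟨m2, b2, rfl, hb2⟩ := exists_concat h2.1
      rw [hb1] at h1b; rw [hb2] at h2b
      subst h1b; subst h2b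
      rw [List.dropLast_concat, List.dropLast_concat] at h
      rw [h]
  have hc3 : U3.ncard ≤ numASeq (d-1) := by
    apply Set.ncard_le_ncard_of_injOn
      (fun l => l.dropLast ++ [l.getLastD 0 - 1]) (ht := finite_A (d-1))
    · rintro l ⟨h1, h2, h3⟩
      obtain ⟨m, b, rfl, hb⟩ := exists_concat h1.1
      rw [hb] at h3
      have hm : m ≠ [] := by
        rintro rfl
        have := h1.2.2.1
        simp at this
        omega
      simp only [Set.mem_setOf_eq, hb, List.dropLast_concat]
      obtain ⟨hOm, -, hcon⟩ := (isOSeq_concat hm b).mp h1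
      refine ⟨(isOSeq_concat hm (b-1)).mpr ⟨hOm, by omega, fun hl => le_trans (by omega) (hcon hl)⟩,
        by simp at h2 ⊢; omega, by simp; omega⟩
    · rintro l1 ⟨h1, -, h1b⟩ l2 ⟨h2, -, h2b⟩ h
      obtain ⟨m1, b1, rfl, hb1⟩ := exists_concat h1.1
      obtain ⟨m2, b2, rfl, hb2⟩ := exists_concat h2.1
      rw [hb1] at h1b; rw [hb2] at h2b
      simp only [hb1, hb2, List.dropLast_concat] at h
      obtain ⟨rfl, hbe⟩ := concat_inj h
      have : b1 = b2 := by omega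
      rw [this]
  calc numASeq d ≤ (U2 ∪ U3).ncard :=
        Set.ncard_le_ncard hsub (hfin2.union hfin3)
    _ ≤ U2.ncard + U3.ncard := Set.ncard_union_le U2 U3
    _ ≤ numASeq (d-2) + numASeq (d-1) := Nat.add_le_add hc2 hc3
    _ = numASeq (d-1) + numASeq (d-2) := Nat.add_comm _ _
section
lemma isOSeq_cons_head {l : List ℕ} (h : IsOSeq l) : ∃ t, l = 1 :: t := by
  rcases l with _ | ⟨a, t⟩
  · exact absurd rfl h.1
  · have := h.2.2.1
    simp at this
    exact ⟨t, by rw [this]⟩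

lemma O1 : numOSeq 1 = 1 := by
  have hset : {l : List ℕ | IsOSeq l ∧ l.sum = 1} = {[1]} := by
    ext l
    simp only [Set.mem_setOf_eq, Set.mem_singleton_iff]
    constructor
    · rintro ⟨h1, h2⟩
      obtain ⟨t, rfl⟩ := isOSeq_cons_head h1
      rcases t with _ | ⟨b, r⟩
      · rfl
      · exfalso
        have hb := h1.2.1 b (by simp)
        simp [List.sum_cons] at h2
        omega
    · rintro rfl
      exact ⟨⟨by simp, by simp, by simp, fun t h1 h2 => by simp only [List.length_cons, List.length_nil] at h2; omega⟩, by simp⟩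
  rw [numOSeq, hset, Set.ncard_singleton]

lemma O2 : numOSeq 2 = 1 := by
  have hset : {l : List ℕ | IsOSeq l ∧ l.sum = 2} = {[1, 1]} := by
    ext l
    simp only [Set.mem_setOf_eq, Set.mem_singleton_iff]
    constructor
    · rintro ⟨h1, h2⟩
      obtain ⟨t, rfl⟩ := isOSeq_cons_head h1
      rcases t with _ | ⟨b, (_ | ⟨c, r⟩)⟩
      · simp at h2
      · have hb := h1.2.1 b (by simp)
        simp [List.sum_cons] at h2
        have : b = 1 := by omega
        rw [this]
      · exfalso
        have hb := h1.2.1 b (by simp)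
        have hc := h1.2.1 c (by simp)
        simp [List.sum_cons] at h2
        omega
    · rintro rfl
      exact ⟨⟨by simp, by simp, by simp, fun t h1 h2 => by simp only [List.length_cons, List.length_nil] at h2; omega⟩, by simp⟩
  rw [numOSeq, hset, Set.ncard_singleton]

lemma A3 : numASeq 3 = 1 := by
  have hset : {l : List ℕ | IsOSeq l ∧ l.sum = 3 ∧ 1 < l.getLastD 0} = {[1, 2]} := by
    ext l
    simp only [Set.mem_setOf_eq, Set.mem_singleton_iff]
    constructor
    · rintro ⟨h1, h2, h3⟩
      obtain ⟨t, rfl⟩ := isOSeq_cons_head h1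
      rcases t with _ | ⟨b, (_ | ⟨c, (_ | ⟨e, r⟩)⟩)⟩
      · simp at h2
      · have hb := h1.2.1 b (by simp)
        simp [List.sum_cons] at h2
        have : b = 2 := by omega
        rw [this]
      · exfalso
        have hb := h1.2.1 b (by simp)
        have hc := h1.2.1 c (by simp)
        simp [List.sum_cons] at h2
        have hb1 : b = 1 := by omega
        have hc1 : c = 1 := by omega
        subst hb1; subst hc1
        simp [List.getLastD] at h3
      · exfalso
        have hb := h1.2.1 b (by simp)
        have hc := h1.2.1 c (by simp)
        have he := h1.2.1 e (by simp)
        simp [List.sum_cons] at h2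
        omega
    · rintro rfl
      refine ⟨⟨by simp, by simp, by simp, fun t h1 h2 => by simp only [List.length_cons, List.length_nil] at h2; omega⟩, by simp, by simp⟩
  rw [numASeq, hset, Set.ncard_singleton]

lemma A4 : numASeq 4 = 1 := by
  have hset : {l : List ℕ | IsOSeq l ∧ l.sum = 4 ∧ 1 < l.getLastD 0} = {[1, 3]} := by
    ext l
    simp only [Set.mem_setOf_eq, Set.mem_singleton_iff]
    constructor
    · rintro ⟨h1, h2, h3⟩
      obtain ⟨t, rfl⟩ := isOSeq_cons_head h1
      rcases t with _ | ⟨b, (_ | ⟨c, (_ | ⟨e, (_ | ⟨f, r⟩)⟩)⟩)⟩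
      · simp at h2
      · have hb := h1.2.1 b (by simp)
        simp [List.sum_cons] at h2
        have : b = 3 := by omega
        rw [this]
      · -- l = [1, b, c] with b + c = 3
        exfalso
        have hb := h1.2.1 b (by simp)
        have hc := h1.2.1 c (by simp)
        simp [List.sum_cons] at h2
        simp [List.getLastD] at h3
        have hb1 : b = 1 := by
          -- if b = 2 then c = 1 contradicting h3
          omega
        subst hb1
        have hc2 : c = 2 := by omega
        subst hc2
        -- constraint: 2 ≤ macaulay 1 1 = 1
        have hcon := h1.2.2.2 1 le_rfl (by simp)
        simp [List.getD] at hcon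
        rw [macaulay_one le_rfl] at hcon
        omega
      · exfalso
        have hb := h1.2.1 b (by simp)
        have hc := h1.2.1 c (by simp)
        have he := h1.2.1 e (by simp)
        simp [List.sum_cons] at h2
        have : b = 1 ∧ c = 1 ∧ e = 1 := by omega
        obtain ⟨rfl, rfl, rfl⟩ := this
        simp [List.getLastD] at h3
      · exfalso
        have hb := h1.2.1 b (by simp)
        have hc := h1.2.1 c (by simp)
        have he := h1.2.1 e (by simp)
        have hf := h1.2.1 f (by simp)
        simp [List.sum_cons] at h2
        omega
    · rintro rfl
      refine ⟨⟨by simp, by simp, by simp, fun t h1 h2 => by simp only [List.length_cons, List.length_nil] at h2; omega⟩, by simp, by simp⟩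
  rw [numASeq, hset, Set.ncard_singleton]
end

lemma main3 : ∀ d : ℕ, 3 ≤ d → numASeq d ≤ numOSeq (d - 2) := by
  intro d
  induction d using Nat.strong_induction_on with
  | _ d ih =>
    intro hd
    rcases Nat.lt_or_ge d 5 with h | h
    · interval_cases d
      · rw [A3, O1]
      · rw [A4, O2]
    · have h1 : numASeq d ≤ numASeq (d-1) + numASeq (d-2) := main2 (by omega)
      have h2 : numASeq (d-1) ≤ numOSeq (d-3) := by
        have := ih (d-1) (by omega) (by omega)
        have he : d - 1 - 2 = d - 3 := by omega
        rwa [he] at this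
      have h3 : numOSeq (d-2) = numOSeq (d-3) + numASeq (d-2) := by
        have := main1 (d := d-2) (by omega)
        have he : d - 2 - 1 = d - 3 := by omega
        rwa [he] at this
      omega


/-- The sequence `(O_d)_{d ≥ 1}` is sub-Fibonacci: `O_1 = O_2 = 1`,
it is non-decreasing, and `O_d ≤ O_{d-1} + O_{d-2}` for all `d ≥ 3`. -/
theorem Od_subFibonacci :
    numOSeq 1 = 1 ∧ numOSeq 2 = 1 ∧
    (∀ d : ℕ, 2 ≤ d → numOSeq (d - 1) ≤ numOSeq d) ∧
    (∀ d : ℕ, 3 ≤ d → numOSeq d ≤ numOSeq (d - 1) + numOSeq (d - 2)) := by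
  refine ⟨O1, O2, fun d hd => ?_, fun d hd => ?_⟩
  · rw [main1 hd]; omega
  · have h1 := main1 (show 2 ≤ d by omega)
    have h2 := main3 d hd
    omega
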